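/- In a convex biproduct category, for every object X, the arrows ◁_p := ⟨id_X, id_X⟩_{p,1-p} : X → X ⊕ X (for p ∈ (0,1)) and ¡_X : X → 0 (the unique arrow to the terminal object) form a natural and coherent co-pca. Namely, with p̃ := pq and q̃ := p(1-q)/(1-pq): ◁_p;(◁_q ⊕ id_X) = ◁_p̃;(id_X ⊕ ◁_q̃) (up to the associator of the coproduct monoidal structure); ◁_p;[id_X,id_X] = id_X; ◁_p;σ_{X,X} = ◁_{1-p}; naturality holds, i.e., f;¡_Y = ¡_X and f;◁_p = ◁_p;(f ⊕ f) for every f : X → Y; and coherence with ⊕ holds, i.e., ◁_p and ¡ on the object 0 are (up to unitors) the identity, ¡_{X⊕Y} = ¡_X ⊕ ¡_Y (up to unitors), and ◁_p on X ⊕ Y equals (◁_p ⊕ ◁_p);(id ⊕ σ_{X,Y} ⊕ id) up to the structural isomorphisms. -/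

import Mathlib

open CategoryTheory

universe v u

/-- A pointed convex algebra (pca): a set with a distinguished point `star` and
binary convex-combination operations `add p` for `p ∈ (0,1)`, extended to `[0,1]`
by `add 1 x y = x` and `add 0 x y = y`. -/
structure PCAStruct (X : Type u) : Type u where
  star : X
  add : ℝ → X → X → X
  add_one : ∀ x y, add 1 x y = x
  add_zero : ∀ x y, add 0 x y = y
  add_assoc' : ∀ p q : ℝ, 0 < p → p < 1 → 0 < q → q < 1 → ∀ x y z,
    add p (add q x y) z = add (p * q) x (add (p * (1 - q) / (1 - p * q)) y z)
  add_comm' : ∀ p : ℝ, 0 < p → p < 1 → ∀ x y, add p x y = add (1 - p) y x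
  add_idem : ∀ p : ℝ, 0 < p → p < 1 → ∀ x, add p x x = x

namespace PCAStruct

variable {X : Type u}

/-- Multiplication by a scalar: `p · x := x +_p ⋆`. -/
def smul (s : PCAStruct X) (p : ℝ) (x : X) : X := s.add p x s.star

/-- The `n`-ary convex sum `Σᵢ pᵢ · xᵢ` of a pca, defined inductively. -/
noncomputable def csum (s : PCAStruct X) : (n : ℕ) → (Fin n → ℝ) → (Fin n → X) → X
  | 0, _, _ => s.star
  | n + 1, p, x =>
      s.add (p 0) (x 0)
        (s.csum n (fun i => if p 0 = 1 then 0 else p i.succ / (1 - p 0)) (fun i => x i.succ))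

end PCAStruct

/-- A PCA-enrichment of a category: every homset carries a pca structure,
compatibly with composition. -/
structure PCAEnrichment (C : Type u) [Category.{v} C] : Type (max u v) where
  pca : ∀ X Y : C, PCAStruct (X ⟶ Y)
  comp_add : ∀ {X Y Z : C} (e : X ⟶ Y) (p : ℝ), 0 < p → p < 1 → ∀ (f g : Y ⟶ Z),
    e ≫ (pca Y Z).add p f g = (pca X Z).add p (e ≫ f) (e ≫ g)
  add_comp : ∀ {X Y Z : C} (p : ℝ), 0 < p → p < 1 → ∀ (f g : X ⟶ Y) (h : Y ⟶ Z),
    (pca X Y).add p f g ≫ h = (pca X Z).add p (f ≫ h) (g ≫ h)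
  comp_star : ∀ {X Y Z : C} (f : X ⟶ Y), f ≫ (pca Y Z).star = (pca X Z).star
  star_comp : ∀ {X Y Z : C} (f : Y ⟶ Z), (pca X Y).star ≫ f = (pca X Z).star

/-- A convex biproduct category: a PCA-enriched category with a zero object and,
for every pair of objects, an object `X₁ ⊕ X₂` which is simultaneously a coproduct
and a convex product, with `ιᵢ ; πⱼ = δᵢⱼ`. -/
structure ConvexBiproduct (C : Type u) [Category.{v} C] extends PCAEnrichment C where
  zero : C
  fromZero : ∀ X : C, zero ⟶ X
  fromZero_unique : ∀ {X : C} (f : zero ⟶ X), f = fromZero X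
  toZero : ∀ X : C, X ⟶ zero
  toZero_unique : ∀ {X : C} (f : X ⟶ zero), f = toZero X
  sum : C → C → C
  inl : ∀ X Y : C, X ⟶ sum X Y
  inr : ∀ X Y : C, Y ⟶ sum X Y
  fst : ∀ X Y : C, sum X Y ⟶ X
  snd : ∀ X Y : C, sum X Y ⟶ Y
  copair_exists : ∀ {X Y Z : C} (f : X ⟶ Z) (g : Y ⟶ Z),
    ∃! h : sum X Y ⟶ Z, inl X Y ≫ h = f ∧ inr X Y ≫ h = g
  pair_exists : ∀ {A X Y : C} (p q : ℝ), 0 ≤ p → 0 ≤ q → p + q ≤ 1 →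
    ∀ (f : A ⟶ X) (g : A ⟶ Y),
      ∃! h : A ⟶ sum X Y,
        h ≫ fst X Y = (pca A X).smul p f ∧ h ≫ snd X Y = (pca A Y).smul q g
  inl_fst : ∀ X Y : C, inl X Y ≫ fst X Y = 𝟙 X
  inl_snd : ∀ X Y : C, inl X Y ≫ snd X Y = (pca X Y).star
  inr_fst : ∀ X Y : C, inr X Y ≫ fst X Y = (pca Y X).star
  inr_snd : ∀ X Y : C, inr X Y ≫ snd X Y = 𝟙 Y

namespace ConvexBiproduct

variable {C : Type u} [Category.{v} C] (B : ConvexBiproduct C)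

/-- The copairing `[f,g]` induced by the coproduct. -/
noncomputable def copair {X Y Z : C} (f : X ⟶ Z) (g : Y ⟶ Z) : B.sum X Y ⟶ Z :=
  (B.copair_exists f g).choose

/-- The convex pairing `⟨f,g⟩_{p,q}` induced by the convex product. -/
noncomputable def pair {A X Y : C} (p q : ℝ) (f : A ⟶ X) (g : A ⟶ Y) : A ⟶ B.sum X Y :=
  if h : 0 ≤ p ∧ 0 ≤ q ∧ p + q ≤ 1 then
    (B.pair_exists p q h.1 h.2.1 h.2.2 f g).choose
  else f ≫ B.inl X Y

/-- The monoidal product of morphisms, `f ⊕ g`. -/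
noncomputable def hsum {X X' Y Y' : C} (f : X ⟶ X') (g : Y ⟶ Y') :
    B.sum X Y ⟶ B.sum X' Y' :=
  B.copair (f ≫ B.inl X' Y') (g ≫ B.inr X' Y')

/-- The symmetry `σ_{X,Y}`. -/
noncomputable def swap (X Y : C) : B.sum X Y ⟶ B.sum Y X :=
  B.copair (B.inr Y X) (B.inl Y X)

/-- Left unitor `λ_X : 0 ⊕ X ⟶ X`. -/
noncomputable def lunit (X : C) : B.sum B.zero X ⟶ X :=
  B.copair (B.fromZero X) (𝟙 X)

/-- Right unitor `ρ_X : X ⊕ 0 ⟶ X`. -/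
noncomputable def runit (X : C) : B.sum X B.zero ⟶ X :=
  B.copair (𝟙 X) (B.fromZero X)

/-- Associator `(X ⊕ Y) ⊕ Z ⟶ X ⊕ (Y ⊕ Z)`. -/
noncomputable def assocHom (X Y Z : C) : B.sum (B.sum X Y) Z ⟶ B.sum X (B.sum Y Z) :=
  B.copair
    (B.copair (B.inl X (B.sum Y Z)) (B.inl Y Z ≫ B.inr X (B.sum Y Z)))
    (B.inr Y Z ≫ B.inr X (B.sum Y Z))

/-- The codiagonal `∇_X = [id,id] : X ⊕ X ⟶ X`. -/
noncomputable def codiag (X : C) : B.sum X X ⟶ X := B.copair (𝟙 X) (𝟙 X)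

/-- The convex diagonal `◁_p = ⟨id,id⟩_{p,1-p} : X ⟶ X ⊕ X`. -/
noncomputable def diag (p : ℝ) (X : C) : X ⟶ B.sum X X :=
  B.pair p (1 - p) (𝟙 X) (𝟙 X)

/-- Scalar multiplication on homsets. -/
def smul {X Y : C} (p : ℝ) (f : X ⟶ Y) : X ⟶ Y := (B.pca X Y).smul p f

/-- Convex combination on homsets. -/
def add {X Y : C} (p : ℝ) (f g : X ⟶ Y) : X ⟶ Y := (B.pca X Y).add p f g

/-- The zero morphism. -/
def star (X Y : C) : X ⟶ Y := (B.pca X Y).star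

end ConvexBiproduct

/-- A functor between PCA-enriched categories is PCA-enriched if it preserves the
pca structure on every homset. -/
structure IsPCAFunctor {C : Type u} {D : Type v} [Category C] [Category D]
    (EC : PCAEnrichment C) (ED : PCAEnrichment D) (F : C ⥤ D) : Prop where
  map_add : ∀ {X Y : C} (p : ℝ), 0 < p → p < 1 → ∀ (f g : X ⟶ Y),
    F.map ((EC.pca X Y).add p f g) = (ED.pca (F.obj X) (F.obj Y)).add p (F.map f) (F.map g)
  map_star : ∀ {X Y : C},
    F.map ((EC.pca X Y).star) = (ED.pca (F.obj X) (F.obj Y)).star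

/-- A functor between convex biproduct categories preserves finite coproducts:
the image of the zero object is initial and the images of the designated
coproduct cocones are coproducts. -/
structure PreservesCBCoproducts {C : Type u} {D : Type v} [Category C] [Category D]
    (BC : ConvexBiproduct C) (BD : ConvexBiproduct D) (F : C ⥤ D) : Prop where
  zero_initial : ∀ Z : D, ∃! _h : F.obj BC.zero ⟶ Z, True
  sum_coprod : ∀ (X Y : C) {Z : D} (f : F.obj X ⟶ Z) (g : F.obj Y ⟶ Z),
    ∃! h : F.obj (BC.sum X Y) ⟶ Z,
      F.map (BC.inl X Y) ≫ h = f ∧ F.map (BC.inr X Y) ≫ h = g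

/-- A morphism of convex biproduct categories: a PCA-enriched functor preserving
finite coproducts. -/
def IsCBMorphism {C : Type u} {D : Type v} [Category C] [Category D]
    (BC : ConvexBiproduct C) (BD : ConvexBiproduct D) (F : C ⥤ D) : Prop :=
  IsPCAFunctor BC.toPCAEnrichment BD.toPCAEnrichment F ∧ PreservesCBCoproducts BC BD F

namespace ConvexBiproduct

variable {C : Type u} [Category.{v} C] (B : ConvexBiproduct C)

/-- The canonical middle-four interchange
`(X ⊕ X) ⊕ (Y ⊕ Y) ⟶ (X ⊕ Y) ⊕ (X ⊕ Y)`, which equals `(id ⊕ σ_{X,Y} ⊕ id)`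
up to the structural isomorphisms of `(⊕, 0)`. -/
noncomputable def interchange (X Y : C) :
    B.sum (B.sum X X) (B.sum Y Y) ⟶ B.sum (B.sum X Y) (B.sum X Y) :=
  B.copair
    (B.copair (B.inl X Y ≫ B.inl (B.sum X Y) (B.sum X Y))
              (B.inl X Y ≫ B.inr (B.sum X Y) (B.sum X Y)))
    (B.copair (B.inr X Y ≫ B.inl (B.sum X Y) (B.sum X Y))
              (B.inr X Y ≫ B.inr (B.sum X Y) (B.sum X Y)))

end ConvexBiproduct

namespace ConvexBiproduct

variable {C : Type u} [Category.{v} C] (B : ConvexBiproduct C)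

theorem copair_inl' {X Y Z : C} (f : X ⟶ Z) (g : Y ⟶ Z) :
    B.inl X Y ≫ B.copair f g = f := (B.copair_exists f g).choose_spec.1.1

theorem copair_inr' {X Y Z : C} (f : X ⟶ Z) (g : Y ⟶ Z) :
    B.inr X Y ≫ B.copair f g = g := (B.copair_exists f g).choose_spec.1.2

theorem copair_inl_assoc {X Y Z W : C} (f : X ⟶ Z) (g : Y ⟶ Z) (h : Z ⟶ W) :
    B.inl X Y ≫ (B.copair f g ≫ h) = f ≫ h := by
  rw [← Category.assoc, B.copair_inl']

theorem copair_inr_assoc {X Y Z W : C} (f : X ⟶ Z) (g : Y ⟶ Z) (h : Z ⟶ W) :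
    B.inr X Y ≫ (B.copair f g ≫ h) = g ≫ h := by
  rw [← Category.assoc, B.copair_inr']

theorem sum_hom_ext {X Y Z : C} {h k : B.sum X Y ⟶ Z}
    (h1 : B.inl X Y ≫ h = B.inl X Y ≫ k)
    (h2 : B.inr X Y ≫ h = B.inr X Y ≫ k) : h = k :=
  (B.copair_exists (B.inl X Y ≫ h) (B.inr X Y ≫ h)).unique ⟨rfl, rfl⟩
    ⟨h1.symm, h2.symm⟩

/-- The key lemma: `◁_p = inl +_p inr`. -/
theorem diag_eq (p : ℝ) (hp0 : 0 < p) (hp1 : p < 1) (X : C) :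
    B.diag p X = (B.pca X (B.sum X X)).add p (B.inl X X) (B.inr X X) := by
  have hc : 0 ≤ p ∧ 0 ≤ 1 - p ∧ p + (1 - p) ≤ 1 := ⟨hp0.le, by linarith, by linarith⟩
  unfold diag pair
  rw [dif_pos hc]
  refine ((B.pair_exists p (1 - p) hc.1 hc.2.1 hc.2.2 (𝟙 X) (𝟙 X)).choose_spec.2 _
    ⟨?_, ?_⟩).symm
  · rw [B.add_comp p hp0 hp1, B.inl_fst, B.inr_fst]
    rfl
  · rw [B.add_comp p hp0 hp1, B.inl_snd, B.inr_snd]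
    exact (B.pca X X).add_comm' p hp0 hp1 _ _

end ConvexBiproduct

/-- **Statement 3.** In a convex biproduct category, for every object `X`, the
arrows `◁_p := ⟨id,id⟩_{p,1-p} : X ⟶ X ⊕ X` (`p ∈ (0,1)`) and `¡_X : X ⟶ 0` form
a natural and coherent co-pca: co-associativity up to the associator,
idempotence `◁_p ; ∇ = id`, symmetry `◁_p ; σ = ◁_{1-p}`, naturality of `¡` and
of `◁_p`, and coherence with `⊕`: `◁_p` and `¡` on `0` are the identity (up to
unitors), `¡_{X⊕Y} = ¡_X ⊕ ¡_Y` (up to unitors), and `◁_p` on `X ⊕ Y` equals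
`(◁_p ⊕ ◁_p) ; (id ⊕ σ_{X,Y} ⊕ id)` up to the structural isomorphisms. -/
theorem copca_structure {C : Type u} [Category.{v} C] (B : ConvexBiproduct C) :
    -- co-associativity (up to the associator)
    (∀ (p q : ℝ), 0 < p → p < 1 → 0 < q → q < 1 → ∀ X : C,
        B.diag p X ≫ B.hsum (B.diag q X) (𝟙 X) ≫ B.assocHom X X X =
          B.diag (p * q) X ≫ B.hsum (𝟙 X) (B.diag (p * (1 - q) / (1 - p * q)) X)) ∧
    -- idempotence
    (∀ (p : ℝ), 0 < p → p < 1 → ∀ X : C, B.diag p X ≫ B.codiag X = 𝟙 X) ∧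
    -- symmetry
    (∀ (p : ℝ), 0 < p → p < 1 → ∀ X : C, B.diag p X ≫ B.swap X X = B.diag (1 - p) X) ∧
    -- naturality of ¡
    (∀ {X Y : C} (f : X ⟶ Y), f ≫ B.toZero Y = B.toZero X) ∧
    -- naturality of ◁_p
    (∀ (p : ℝ), 0 < p → p < 1 → ∀ {X Y : C} (f : X ⟶ Y),
        f ≫ B.diag p Y = B.diag p X ≫ B.hsum f f) ∧
    -- ◁_p on 0 is the identity (up to unitors)
    (∀ (p : ℝ), 0 < p → p < 1 → B.diag p B.zero ≫ B.lunit B.zero = 𝟙 B.zero) ∧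
    -- ¡ on 0 is the identity
    (B.toZero B.zero = 𝟙 B.zero) ∧
    -- ¡_{X⊕Y} = ¡_X ⊕ ¡_Y (up to unitors)
    (∀ X Y : C, B.hsum (B.toZero X) (B.toZero Y) ≫ B.lunit B.zero = B.toZero (B.sum X Y)) ∧
    -- coherence of ◁_p with ⊕ (up to the structural isomorphisms)
    (∀ (p : ℝ), 0 < p → p < 1 → ∀ X Y : C,
        B.diag p (B.sum X Y) =
          B.hsum (B.diag p X) (B.diag p Y) ≫ B.interchange X Y) := by
  refine ⟨?_, ?_, ?_, ?_, ?_, ?_, ?_, ?_, ?_⟩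
  · -- co-associativity
    intro p q hp0 hp1 hq0 hq1 X
    have hpq0 : 0 < p * q := mul_pos hp0 hq0
    have hpq1 : p * q < 1 := by nlinarith
    have hq'0 : 0 < p * (1 - q) / (1 - p * q) :=
      div_pos (mul_pos hp0 (by linarith)) (by linarith)
    have hq'1 : p * (1 - q) / (1 - p * q) < 1 := by
      rw [div_lt_one (by linarith)]; nlinarith
    rw [B.diag_eq p hp0 hp1, B.diag_eq q hq0 hq1, B.diag_eq _ hpq0 hpq1,
      B.diag_eq _ hq'0 hq'1, B.add_comp p hp0 hp1, B.add_comp (p * q) hpq0 hpq1]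
    simp only [ConvexBiproduct.hsum, ConvexBiproduct.assocHom, B.copair_inl', B.copair_inr', B.copair_inl_assoc,
      B.copair_inr_assoc, Category.assoc, Category.id_comp, Category.comp_id]
    rw [B.add_comp q hq0 hq1, B.add_comp _ hq'0 hq'1]
    simp only [B.copair_inl', B.copair_inr', B.copair_inl_assoc, B.copair_inr_assoc,
      Category.assoc]
    rw [(B.pca X _).add_assoc' p q hp0 hp1 hq0 hq1]
  · -- idempotence
    intro p hp0 hp1 X
    rw [B.diag_eq p hp0 hp1, B.add_comp p hp0 hp1]
    simp only [ConvexBiproduct.codiag, B.copair_inl', B.copair_inr']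
    exact (B.pca X X).add_idem p hp0 hp1 _
  · -- symmetry
    intro p hp0 hp1 X
    rw [B.diag_eq p hp0 hp1, B.diag_eq (1 - p) (by linarith) (by linarith),
      B.add_comp p hp0 hp1]
    simp only [ConvexBiproduct.swap, B.copair_inl', B.copair_inr']
    exact (B.pca X (B.sum X X)).add_comm' p hp0 hp1 _ _
  · -- naturality of ¡
    intro X Y f
    exact B.toZero_unique (f ≫ B.toZero Y)
  · -- naturality of ◁_p
    intro p hp0 hp1 X Y f
    rw [B.diag_eq p hp0 hp1, B.diag_eq p hp0 hp1, B.comp_add f p hp0 hp1,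
      B.add_comp p hp0 hp1]
    simp only [ConvexBiproduct.hsum, B.copair_inl', B.copair_inr']
  · -- ◁_p on 0 is the identity
    intro p hp0 hp1
    exact (B.toZero_unique _).trans (B.toZero_unique (𝟙 B.zero)).symm
  · -- ¡ on 0 is the identity
    exact (B.toZero_unique (𝟙 B.zero)).symm
  · -- ¡ on a sum
    intro X Y
    exact B.toZero_unique _
  · -- coherence of ◁_p with ⊕
    intro p hp0 hp1 X Y
    apply B.sum_hom_ext
    · rw [B.diag_eq p hp0 hp1, B.diag_eq p hp0 hp1, B.diag_eq p hp0 hp1, B.comp_add (B.inl X Y) p hp0 hp1]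
      simp only [ConvexBiproduct.hsum, ConvexBiproduct.interchange, B.copair_inl', B.copair_inr', B.copair_inl_assoc,
        B.copair_inr_assoc, Category.assoc]
      rw [B.add_comp p hp0 hp1]
      simp only [B.copair_inl', B.copair_inr', B.copair_inl_assoc, B.copair_inr_assoc]
    · rw [B.diag_eq p hp0 hp1, B.diag_eq p hp0 hp1, B.diag_eq p hp0 hp1, B.comp_add (B.inr X Y) p hp0 hp1]
      simp only [ConvexBiproduct.hsum, ConvexBiproduct.interchange, B.copair_inl', B.copair_inr', B.copair_inl_assoc,
        B.copair_inr_assoc, Category.assoc]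
      rw [B.add_comp p hp0 hp1]
      simp only [B.copair_inl', B.copair_inr', B.copair_inl_assoc, B.copair_inr_assoc]
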